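/- Limiting variance of the fixed-asymmetry smoothed estimator: for t₀∈[0,1], define D_{t₀}(x) := 1{τ(x)>0} + t₀·1{τ(x)=0}. Then Var(ψ(D_{t₀}, π₁, (μ₁,μ₀))) = Var(d₀(X)·μ₁(X)+(1−d₀(X))·μ₀(X)) + E[1{τ(X)>0}·σ₁²(X)/π₁(X) + 1{τ(X)<0}·σ₀²(X)/(1−π₁(X))] + E[(t₀²·σ₁²(X)/π₁(X) + (1−t₀)²·σ₀²(X)/(1−π₁(X)))·1{τ(X)=0}], i.e., it splits into a regular part not depending on t₀ and a nonregular part supported on {τ(X)=0} depending on t₀. -/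

import Mathlib

/-!
Write `G = D μ₁ + (1 - D) μ₀` and split the score as `ψ = G(X) + R` with
`R = (D/π₁)(X) · A (Y - μ₁(X)) + ((1 - D)/(1 - π₁))(X) · (1 - A)(Y - μ₀(X))`.
The outcome moments give `E[R | X] = 0` and, since `A (1 - A) = 0`,
`E[R² | X] = D²σ₁²/π₁ + (1 - D)²σ₀²/(1 - π₁)` at `X`, so the law of total variance yields
`Var ψ = Var G(X) + E[D²σ₁²/π₁ + (1 - D)²σ₀²/(1 - π₁)](X)`.
For `D = D_{t₀}`, `G` agrees with the value of `d₀` because `μ₁ = μ₀` wherever the two rules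
differ, and the second term splits according to the sign of `τ(X)`.
-/

open MeasureTheory ProbabilityTheory Filter Topology
open scoped Classical

/-- AIPW score `ψ(D, p, (m₁, m₀))` evaluated at a sample point `ω`. -/
noncomputable def aipw {Ω 𝒳 : Type*} (X : Ω → 𝒳) (A Y : Ω → ℝ)
    (D p m₁ m₀ : 𝒳 → ℝ) (ω : Ω) : ℝ :=
  (A ω * D (X ω) + (1 - A ω) * (1 - D (X ω))) /
      (A ω * p (X ω) + (1 - A ω) * (1 - p (X ω))) *
    (Y ω - (A ω * m₁ (X ω) + (1 - A ω) * m₀ (X ω)))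
  + D (X ω) * m₁ (X ω) + (1 - D (X ω)) * m₀ (X ω)

open scoped ENNReal

section CondExp

variable {Ω : Type*} {m m₀ : MeasurableSpace Ω} {P : Measure[m₀] Ω}

lemma condExp_mul_sub_eq_zero [IsFiniteMeasure P] {B Y μ p : Ω → ℝ} (hB : MemLp B ∞ P)
    (hY : Integrable Y P) (hμm : StronglyMeasurable[m] μ) (hμ : Integrable μ P)
    (hcB : P[B | m] =ᵐ[P] p) (hcBY : P[B * Y | m] =ᵐ[P] μ * p) :
    P[B * (Y - μ) | m] =ᵐ[P] 0 := by
  have hμB : Integrable (μ * B) P := hμ.mul_of_top_left hB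
  have hsplit : B * (Y - μ) = B * Y - μ * B := by ring
  rw [hsplit]
  filter_upwards [condExp_sub (m := m) (hY.mul_of_top_right hB) hμB,
    condExp_mul_of_stronglyMeasurable_left hμm hμB (hB.integrable le_top), hcB, hcBY]
    with ω hsub hpull hB' hBY
  simp [hsub, hpull, hB', hBY]

lemma condExp_mul_sub_sq [IsFiniteMeasure P] {B Y μ p s : Ω → ℝ} (hB : MemLp B ∞ P)
    (hY : MemLp Y 2 P) (hμm : StronglyMeasurable[m] μ) (hμ : MemLp μ 2 P)
    (hcB : P[B | m] =ᵐ[P] p) (hcBY : P[B * Y | m] =ᵐ[P] μ * p)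
    (hcBY2 : P[B * Y ^ 2 | m] =ᵐ[P] (μ ^ 2 + s) * p) :
    P[B * (Y - μ) ^ 2 | m] =ᵐ[P] s * p := by
  have hBY2 : Integrable (B * Y ^ 2) P := hY.integrable_sq.mul_of_top_right hB
  have hBYL2 : MemLp (B * Y) 2 P := hY.mul hB
  have hμBY : Integrable (μ * (B * Y)) P := hμ.integrable_mul hBYL2
  have h2μBY : Integrable (2 * (μ * (B * Y))) P := hμBY.const_mul 2
  have hμ2B : Integrable (μ ^ 2 * B) P := hμ.integrable_sq.mul_of_top_left hB
  have hsplit : B * (Y - μ) ^ 2 = B * Y ^ 2 - 2 * (μ * (B * Y)) + μ ^ 2 * B := by ring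
  rw [hsplit]
  filter_upwards [condExp_add (m := m) (hBY2.sub h2μBY) hμ2B,
    condExp_sub (m := m) hBY2 h2μBY, condExp_ofNat (m := m) 2 (μ * (B * Y)),
    condExp_mul_of_stronglyMeasurable_left hμm hμBY (hBYL2.integrable one_le_two),
    condExp_mul_of_stronglyMeasurable_left (hμm.pow 2) hμ2B (hB.integrable le_top),
    hcB, hcBY, hcBY2] with ω hadd hsub h2 hpull hpull' hB' hBY' hBY2'
  simp only [hadd, Pi.add_apply, hsub, Pi.sub_apply, h2, hpull, hpull', Pi.mul_apply, hB', hBY',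
    hBY2', Pi.pow_apply, Pi.ofNat_apply]
  ring

lemma condExp_mul_add_mul {w₁ w₀ g₁ g₀ h₁ h₀ : Ω → ℝ}
    (hw₁m : StronglyMeasurable[m] w₁) (hw₀m : StronglyMeasurable[m] w₀)
    (hw₁ : MemLp w₁ ∞ P) (hw₀ : MemLp w₀ ∞ P) (hg₁ : Integrable g₁ P) (hg₀ : Integrable g₀ P)
    (hc₁ : P[g₁ | m] =ᵐ[P] h₁) (hc₀ : P[g₀ | m] =ᵐ[P] h₀) :
    P[w₁ * g₁ + w₀ * g₀ | m] =ᵐ[P] w₁ * h₁ + w₀ * h₀ := by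
  have hwg₁ := hg₁.mul_of_top_right hw₁
  have hwg₀ := hg₀.mul_of_top_right hw₀
  filter_upwards [condExp_add (m := m) hwg₁ hwg₀,
    condExp_mul_of_stronglyMeasurable_left hw₁m hwg₁ hg₁,
    condExp_mul_of_stronglyMeasurable_left hw₀m hwg₀ hg₀, hc₁, hc₀] with ω hadd h1 h0 h1' h0'
  simp [hadd, h1, h0, h1', h0']

lemma variance_add_of_condExp [IsProbabilityMeasure P] (hm : m ≤ m₀) {G R V : Ω → ℝ}
    (hGm : StronglyMeasurable[m] G) (hG : MemLp G 2 P) (hR : MemLp R 2 P)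
    (hcR : P[R | m] =ᵐ[P] 0) (hcR2 : P[R ^ 2 | m] =ᵐ[P] V) :
    variance (G + R) P = variance G P + ∫ ω, V ω ∂P := by
  have hc : P[G + R | m] =ᵐ[P] G := by
    filter_upwards [condExp_add (m := m) (hG.integrable one_le_two) (hR.integrable one_le_two),
      hcR] with ω hadd hR'
    simp [hadd, hR', condExp_of_stronglyMeasurable hm hGm (hG.integrable one_le_two)]
  have hres : (G + R - P[G + R | m]) ^ 2 =ᵐ[P] R ^ 2 := by
    filter_upwards [hc] with ω hω
    simp [hω]
  rw [← integral_condVar_add_variance_condExp hm (hG.add hR), variance_congr hc, add_comm]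
  congr 1
  exact integral_congr_ae ((condExp_congr_ae hres).trans hcR2)

lemma condExp_one_sub [IsFiniteMeasure P] (hm : m ≤ m₀) {B p : Ω → ℝ} (hB : Integrable B P)
    (hcB : P[B | m] =ᵐ[P] p) : P[1 - B | m] =ᵐ[P] 1 - p := by
  filter_upwards [condExp_sub (m := m) (integrable_const (1 : ℝ)) hB, hcB] with ω hsub hB'
  change P[(fun _ => (1 : ℝ)) - B | m] ω = 1 - p ω
  rw [hsub, Pi.sub_apply, condExp_const hm, hB']

lemma variance_add_mul_add_mul [IsProbabilityMeasure P] (hm : m ≤ m₀)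
    {G w₁ w₀ g₁ g₀ v₁ v₀ : Ω → ℝ} (hGm : StronglyMeasurable[m] G) (hG : MemLp G 2 P)
    (hw₁m : StronglyMeasurable[m] w₁) (hw₀m : StronglyMeasurable[m] w₀)
    (hw₁ : MemLp w₁ ∞ P) (hw₀ : MemLp w₀ ∞ P) (hg₁ : MemLp g₁ 2 P) (hg₀ : MemLp g₀ 2 P)
    (hg : g₁ * g₀ = 0) (hc₁ : P[g₁ | m] =ᵐ[P] 0) (hc₀ : P[g₀ | m] =ᵐ[P] 0)
    (hv₁ : P[g₁ ^ 2 | m] =ᵐ[P] v₁) (hv₀ : P[g₀ ^ 2 | m] =ᵐ[P] v₀) :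
    variance (G + (w₁ * g₁ + w₀ * g₀)) P
      = variance G P + ∫ ω, (w₁ ω ^ 2 * v₁ ω + w₀ ω ^ 2 * v₀ ω) ∂P := by
  refine variance_add_of_condExp hm hGm hG ((hg₁.mul hw₁).add (hg₀.mul hw₀)) ?_ ?_
  · filter_upwards [condExp_mul_add_mul hw₁m hw₀m hw₁ hw₀ (hg₁.integrable one_le_two)
      (hg₀.integrable one_le_two) hc₁ hc₀] with ω h
    simp [h]
  · have hsq : (w₁ * g₁ + w₀ * g₀) ^ 2 = w₁ ^ 2 * g₁ ^ 2 + w₀ ^ 2 * g₀ ^ 2 := by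
      linear_combination (2 * w₁ * w₀) * hg
    rw [hsq]
    exact condExp_mul_add_mul (hw₁m.pow 2) (hw₀m.pow 2) (sq w₁ ▸ hw₁.mul hw₁)
      (sq w₀ ▸ hw₀.mul hw₀) hg₁.integrable_sq hg₀.integrable_sq hv₁ hv₀

lemma variance_add_weighted_residuals [IsProbabilityMeasure P] (hm : m ≤ m₀)
    {B Y G w₁ w₀ μ₁ μ₀ p s₁ s₀ : Ω → ℝ} (hB : ∀ ω, B ω = 0 ∨ B ω = 1)
    (hBm : AEStronglyMeasurable B P) (hY : MemLp Y 2 P)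
    (hGm : StronglyMeasurable[m] G) (hG : MemLp G 2 P)
    (hw₁m : StronglyMeasurable[m] w₁) (hw₀m : StronglyMeasurable[m] w₀)
    (hw₁ : MemLp w₁ ∞ P) (hw₀ : MemLp w₀ ∞ P)
    (hμ₁ : MemLp μ₁ 2 P) (hμ₀ : MemLp μ₀ 2 P)
    (hμ₁m : StronglyMeasurable[m] μ₁) (hμ₀m : StronglyMeasurable[m] μ₀) (hcB : P[B | m] =ᵐ[P] p)
    (hc₁ : P[B * Y | m] =ᵐ[P] μ₁ * p) (hc₀ : P[(1 - B) * Y | m] =ᵐ[P] μ₀ * (1 - p))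
    (hv₁ : P[B * Y ^ 2 | m] =ᵐ[P] (μ₁ ^ 2 + s₁) * p)
    (hv₀ : P[(1 - B) * Y ^ 2 | m] =ᵐ[P] (μ₀ ^ 2 + s₀) * (1 - p)) :
    variance (G + (w₁ * (B * (Y - μ₁)) + w₀ * ((1 - B) * (Y - μ₀)))) P
      = variance G P + ∫ ω, (w₁ ω ^ 2 * (s₁ ω * p ω) + w₀ ω ^ 2 * (s₀ ω * (1 - p ω))) ∂P := by
  have hBtop : MemLp B ∞ P := memLp_top_of_bound hBm 1
    (ae_of_all _ fun ω => by rcases hB ω with h | h <;> simp [h])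
  have h1Btop : MemLp (1 - B) ∞ P := (memLp_top_const 1).sub hBtop
  have hcB' := condExp_one_sub hm (hBtop.integrable le_top) hcB
  have hsq₁ : (B * (Y - μ₁)) ^ 2 = B * (Y - μ₁) ^ 2 := by
    funext ω; rcases hB ω with h | h <;> simp [h]
  have hsq₀ : ((1 - B) * (Y - μ₀)) ^ 2 = (1 - B) * (Y - μ₀) ^ 2 := by
    funext ω; rcases hB ω with h | h <;> simp [h]
  refine variance_add_mul_add_mul hm hGm hG hw₁m hw₀m hw₁ hw₀ ((hY.sub hμ₁).mul hBtop)
    ((hY.sub hμ₀).mul h1Btop) ?_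
    (condExp_mul_sub_eq_zero hBtop (hY.integrable one_le_two) hμ₁m (hμ₁.integrable one_le_two)
      hcB hc₁)
    (condExp_mul_sub_eq_zero h1Btop (hY.integrable one_le_two) hμ₀m (hμ₀.integrable one_le_two)
      hcB' hc₀)
    (hsq₁ ▸ condExp_mul_sub_sq hBtop hY hμ₁m hμ₁ hcB hc₁ hv₁)
    (hsq₀ ▸ condExp_mul_sub_sq h1Btop hY hμ₀m hμ₀ hcB' hc₀ hv₀)
  funext ω; rcases hB ω with h | h <;> simp [h]

end CondExp

lemma abs_div_le_div_of_abs_le {a b c K : ℝ} (ha : |a| ≤ K) (hc : 0 < c) (hb : c ≤ b) :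
    |a / b| ≤ K / c := by
  rw [abs_div, abs_of_pos (hc.trans_le hb)]
  exact div_le_div₀ ((abs_nonneg a).trans ha) ha hc hb

lemma abs_le_one_of_mem_Icc {a : ℝ} (ha : a ∈ Set.Icc 0 1) : |a| ≤ 1 :=
  abs_le.2 ⟨by linarith [ha.1], ha.2⟩

lemma integrable_mul_div_comp {Ω 𝒳 : Type*} [MeasurableSpace Ω] [MeasurableSpace 𝒳]
    {P : Measure Ω} {X : Ω → 𝒳} (hX : Measurable X) {e s q : 𝒳 → ℝ} {K c : ℝ}
    (he : Measurable e) (hq : Measurable q) (heK : ∀ x, |e x| ≤ K) (hc : 0 < c)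
    (hqc : ∀ x, c ≤ q x) (hs : Integrable (fun ω => s (X ω)) P) :
    Integrable (fun ω => e (X ω) * s (X ω) / q (X ω)) P :=
  (hs.bdd_mul ((he.div hq).comp hX).aestronglyMeasurable
    (ae_of_all _ fun ω => abs_div_le_div_of_abs_le (heK (X ω)) hc (hqc (X ω)))).congr
    (ae_of_all _ fun ω => by simp only [Function.comp_apply, Pi.div_apply]; ring)

lemma aipw_eq_add {Ω 𝒳 : Type*} {X : Ω → 𝒳} {A : Ω → ℝ} (hA : ∀ ω, A ω = 0 ∨ A ω = 1)
    (Y : Ω → ℝ) (D p m₁ m₀ : 𝒳 → ℝ) :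
    aipw X A Y D p m₁ m₀ = (fun ω => D (X ω) * m₁ (X ω) + (1 - D (X ω)) * m₀ (X ω))
      + ((fun ω => D (X ω) / p (X ω)) * (A * (Y - fun ω => m₁ (X ω)))
        + (fun ω => (1 - D (X ω)) / (1 - p (X ω))) * ((1 - A) * (Y - fun ω => m₀ (X ω)))) := by
  funext ω
  rcases hA ω with h | h <;> simp [aipw, h] <;> ring

theorem variance_aipw {Ω 𝒳 : Type*} [MeasurableSpace Ω] [MeasurableSpace 𝒳]
    (P : Measure Ω) [IsProbabilityMeasure P] {X : Ω → 𝒳} {A Y : Ω → ℝ}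
    (hX : Measurable X) (hA : Measurable A) (hAbin : ∀ ω, A ω = 0 ∨ A ω = 1) (hY : MemLp Y 2 P)
    {c : ℝ} (hc : 0 < c) {p : 𝒳 → ℝ} (hpm : Measurable p) (hp : ∀ x, p x ∈ Set.Icc c (1 - c))
    (hcondA : P[A | MeasurableSpace.comap X inferInstance] =ᵐ[P] fun ω => p (X ω))
    {m₁ m₀ : 𝒳 → ℝ} (hm₁m : Measurable m₁) (hm₀m : Measurable m₀)
    (hm₁ : MemLp (fun ω => m₁ (X ω)) 2 P) (hm₀ : MemLp (fun ω => m₀ (X ω)) 2 P)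
    (hcond1 : P[fun ω => A ω * Y ω | MeasurableSpace.comap X inferInstance]
      =ᵐ[P] fun ω => m₁ (X ω) * p (X ω))
    (hcond0 : P[fun ω => (1 - A ω) * Y ω | MeasurableSpace.comap X inferInstance]
      =ᵐ[P] fun ω => m₀ (X ω) * (1 - p (X ω)))
    {s₁ s₀ : 𝒳 → ℝ}
    (hcondsq1 : P[fun ω => A ω * Y ω ^ 2 | MeasurableSpace.comap X inferInstance]
      =ᵐ[P] fun ω => (m₁ (X ω) ^ 2 + s₁ (X ω)) * p (X ω))
    (hcondsq0 : P[fun ω => (1 - A ω) * Y ω ^ 2 | MeasurableSpace.comap X inferInstance]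
      =ᵐ[P] fun ω => (m₀ (X ω) ^ 2 + s₀ (X ω)) * (1 - p (X ω)))
    {D : 𝒳 → ℝ} (hDm : Measurable D) (hD : ∀ x, D x ∈ Set.Icc 0 1) :
    variance (aipw X A Y D p m₁ m₀) P
      = variance (fun ω => D (X ω) * m₁ (X ω) + (1 - D (X ω)) * m₀ (X ω)) P
        + ∫ ω, (D (X ω) ^ 2 * s₁ (X ω) / p (X ω)
            + (1 - D (X ω)) ^ 2 * s₀ (X ω) / (1 - p (X ω))) ∂P := by
  have hXm : Measurable[MeasurableSpace.comap X inferInstance] X := comap_measurable X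
  have hpc : ∀ x, c ≤ p x := fun x => (hp x).1
  have hpc' : ∀ x, c ≤ 1 - p x := fun x => by linarith [(hp x).2]
  have hD' : ∀ x, 1 - D x ∈ Set.Icc 0 1 := fun x => by
    constructor <;> linarith [(hD x).1, (hD x).2]
  have hDtop : MemLp (fun ω => D (X ω)) ∞ P :=
    memLp_top_of_bound (hDm.comp hX).aestronglyMeasurable 1
      (ae_of_all _ fun ω => abs_le_one_of_mem_Icc (hD (X ω)))
  have hw₁ : MemLp (fun ω => D (X ω) / p (X ω)) ∞ P :=
    memLp_top_of_bound ((hDm.div hpm).comp hX).aestronglyMeasurable (1 / c)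
      (ae_of_all _ fun ω => abs_div_le_div_of_abs_le (abs_le_one_of_mem_Icc (hD _)) hc (hpc _))
  have hw₀ : MemLp (fun ω => (1 - D (X ω)) / (1 - p (X ω))) ∞ P :=
    memLp_top_of_bound (((measurable_const.sub hDm).div (measurable_const.sub hpm)).comp
      hX).aestronglyMeasurable (1 / c)
      (ae_of_all _ fun ω => abs_div_le_div_of_abs_le (abs_le_one_of_mem_Icc (hD' _)) hc (hpc' _))
  have hGm : StronglyMeasurable[MeasurableSpace.comap X inferInstance]
      (fun ω => D (X ω) * m₁ (X ω) + (1 - D (X ω)) * m₀ (X ω)) :=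
    (((hDm.mul hm₁m).add ((measurable_const.sub hDm).mul hm₀m)).comp hXm).stronglyMeasurable
  have hw₁m : StronglyMeasurable[MeasurableSpace.comap X inferInstance]
      (fun ω => D (X ω) / p (X ω)) := ((hDm.div hpm).comp hXm).stronglyMeasurable
  have hw₀m : StronglyMeasurable[MeasurableSpace.comap X inferInstance]
      (fun ω => (1 - D (X ω)) / (1 - p (X ω))) :=
    (((measurable_const.sub hDm).div (measurable_const.sub hpm)).comp hXm).stronglyMeasurable
  rw [aipw_eq_add hAbin, variance_add_weighted_residuals hX.comap_le hAbin hA.aestronglyMeasurable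
    hY hGm ((hm₁.mul' hDtop).add (hm₀.mul' ((memLp_top_const 1).sub hDtop))) hw₁m hw₀m hw₁ hw₀
    hm₁ hm₀ (hm₁m.comp hXm).stronglyMeasurable (hm₀m.comp hXm).stronglyMeasurable hcondA hcond1
    hcond0 hcondsq1 hcondsq0]
  congr 1
  refine integral_congr_ae (ae_of_all _ fun ω => ?_)
  have hp₁ : p (X ω) ≠ 0 := (hc.trans_le (hpc _)).ne'
  have hp₀ : 1 - p (X ω) ≠ 0 := (hc.trans_le (hpc' _)).ne'
  field_simp

/-- The rule `D_{t}`: treat when `τ > 0`, and with probability `t` at a tie `τ = 0`. -/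
noncomputable def smoothedRule (t τ : ℝ) : ℝ :=
  (if 0 < τ then 1 else 0) + t * (if τ = 0 then 1 else 0)

lemma measurable_smoothedRule (t : ℝ) : Measurable (smoothedRule t) :=
  (Measurable.ite measurableSet_Ioi measurable_const measurable_const).add
    (measurable_const.mul (Measurable.ite (measurableSet_singleton 0) measurable_const
      measurable_const))

lemma smoothedRule_mem_Icc {t : ℝ} (ht : t ∈ Set.Icc 0 1) (τ : ℝ) :
    smoothedRule t τ ∈ Set.Icc 0 1 := by
  unfold smoothedRule
  split_ifs <;> simp_all

lemma smoothedRule_sub_mul_add (t a b : ℝ) :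
    smoothedRule t (a - b) * a + (1 - smoothedRule t (a - b)) * b
      = (if 0 < a - b then 1 else 0) * a + (1 - if 0 < a - b then 1 else 0) * b := by
  rcases lt_trichotomy (a - b) 0 with h | h | h
  · simp [smoothedRule, h.ne, h.not_gt]
  · simp [smoothedRule, sub_eq_zero.1 h]; ring
  · simp [smoothedRule, h, h.ne']

lemma smoothedRule_sq_mul_div_add (t τ s₁ s₀ p : ℝ) :
    smoothedRule t τ ^ 2 * s₁ / p + (1 - smoothedRule t τ) ^ 2 * s₀ / (1 - p)
      = ((if 0 < τ then 1 else 0) * s₁ / p + (if τ < 0 then 1 else 0) * s₀ / (1 - p))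
        + (t ^ 2 * s₁ / p + (1 - t) ^ 2 * s₀ / (1 - p)) * (if τ = 0 then 1 else 0) := by
  rcases lt_trichotomy τ 0 with h | h | h
  · simp [smoothedRule, h, h.ne, h.not_gt]
  · simp [smoothedRule, h]
  · simp [smoothedRule, h, h.ne', h.not_gt]

lemma integral_smoothedRule_variance {Ω 𝒳 : Type*} [MeasurableSpace Ω] [MeasurableSpace 𝒳]
    (P : Measure Ω) {X : Ω → 𝒳} (hX : Measurable X) {τ : 𝒳 → ℝ} (hτ : Measurable τ)
    {c : ℝ} (hc : 0 < c) {p : 𝒳 → ℝ} (hpm : Measurable p) (hp : ∀ x, p x ∈ Set.Icc c (1 - c))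
    {s₁ s₀ : 𝒳 → ℝ} (hs₁ : Integrable (fun ω => s₁ (X ω)) P)
    (hs₀ : Integrable (fun ω => s₀ (X ω)) P) (t : ℝ) :
    ∫ ω, (smoothedRule t (τ (X ω)) ^ 2 * s₁ (X ω) / p (X ω)
        + (1 - smoothedRule t (τ (X ω))) ^ 2 * s₀ (X ω) / (1 - p (X ω))) ∂P
      = ∫ ω, ((if 0 < τ (X ω) then (1 : ℝ) else 0) * s₁ (X ω) / p (X ω)
          + (if τ (X ω) < 0 then (1 : ℝ) else 0) * s₀ (X ω) / (1 - p (X ω))) ∂P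
        + ∫ ω, (t ^ 2 * s₁ (X ω) / p (X ω) + (1 - t) ^ 2 * s₀ (X ω) / (1 - p (X ω)))
            * (if τ (X ω) = 0 then (1 : ℝ) else 0) ∂P := by
  have hpc : ∀ x, c ≤ p x := fun x => (hp x).1
  have hpc' : ∀ x, c ≤ 1 - p x := fun x => by linarith [(hp x).2]
  have hind : ∀ (q : Prop) [Decidable q], |(if q then (1 : ℝ) else 0)| ≤ 1 := fun q _ => by
    split_ifs <;> simp
  have hpos : Measurable fun x => if 0 < τ x then (1 : ℝ) else 0 :=
    Measurable.ite (measurableSet_lt measurable_const hτ) measurable_const measurable_const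
  have hneg : Measurable fun x => if τ x < 0 then (1 : ℝ) else 0 :=
    Measurable.ite (measurableSet_lt hτ measurable_const) measurable_const measurable_const
  have htie : Measurable fun x => if τ x = 0 then (1 : ℝ) else 0 :=
    Measurable.ite (measurableSet_eq_fun hτ measurable_const) measurable_const measurable_const
  have h1p : Measurable fun x => 1 - p x := measurable_const.sub hpm
  have hreg : Integrable (fun ω => (if 0 < τ (X ω) then (1 : ℝ) else 0) * s₁ (X ω) / p (X ω)
      + (if τ (X ω) < 0 then (1 : ℝ) else 0) * s₀ (X ω) / (1 - p (X ω))) P :=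
    (integrable_mul_div_comp hX hpos hpm (fun _ => hind _) hc hpc hs₁).add
      (integrable_mul_div_comp hX hneg h1p (fun _ => hind _) hc hpc' hs₀)
  have htieI : Integrable (fun ω => (t ^ 2 * s₁ (X ω) / p (X ω)
      + (1 - t) ^ 2 * s₀ (X ω) / (1 - p (X ω))) * (if τ (X ω) = 0 then (1 : ℝ) else 0)) P :=
    (((integrable_mul_div_comp hX htie hpm (fun _ => hind _) hc hpc hs₁).const_mul (t ^ 2)).add
      ((integrable_mul_div_comp hX htie h1p (fun _ => hind _) hc hpc' hs₀).const_mul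
        ((1 - t) ^ 2))).congr (ae_of_all _ fun ω => by simp only [Pi.add_apply]; ring)
  rw [← integral_add hreg htieI]
  exact integral_congr_ae (ae_of_all _ fun ω => smoothedRule_sq_mul_div_add _ _ _ _ _)

theorem stmt_10_general {Ω 𝒳 : Type*} [MeasurableSpace Ω] [MeasurableSpace 𝒳]
    (P : Measure Ω) [IsProbabilityMeasure P]
    (X : Ω → 𝒳) (A Y : Ω → ℝ)
    (hX : Measurable X) (hA : Measurable A) (hAbin : ∀ ω, A ω = 0 ∨ A ω = 1) (hYL2 : MemLp Y 2 P)
    (c : ℝ) (hc : c ∈ Set.Ioo (0 : ℝ) (1 / 2))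
    (π₁ : 𝒳 → ℝ) (hπ₁m : Measurable π₁) (hπ₁r : ∀ x, π₁ x ∈ Set.Icc c (1 - c))
    (hcondA : P[A | MeasurableSpace.comap X inferInstance]
      =ᵐ[P] fun ω => π₁ (X ω))
    (μ₁ μ₀ : 𝒳 → ℝ) (hμ₁m : Measurable μ₁) (hμ₀m : Measurable μ₀)
    (hμ₁L2 : MemLp (fun ω => μ₁ (X ω)) 2 P) (hμ₀L2 : MemLp (fun ω => μ₀ (X ω)) 2 P)
    (hcond1 : P[fun ω => A ω * Y ω | MeasurableSpace.comap X inferInstance]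
      =ᵐ[P] fun ω => μ₁ (X ω) * π₁ (X ω))
    (hcond0 : P[fun ω => (1 - A ω) * Y ω | MeasurableSpace.comap X inferInstance]
      =ᵐ[P] fun ω => μ₀ (X ω) * (1 - π₁ (X ω)))
    (σ₁sq σ₀sq : 𝒳 → ℝ) (hσ₁L1 : Integrable (fun ω => σ₁sq (X ω)) P)
    (hσ₀L1 : Integrable (fun ω => σ₀sq (X ω)) P)
    (hcondsq1 : P[fun ω => A ω * Y ω ^ 2 | MeasurableSpace.comap X inferInstance]
      =ᵐ[P] fun ω => (μ₁ (X ω) ^ 2 + σ₁sq (X ω)) * π₁ (X ω))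
    (hcondsq0 : P[fun ω => (1 - A ω) * Y ω ^ 2 | MeasurableSpace.comap X inferInstance]
      =ᵐ[P] fun ω => (μ₀ (X ω) ^ 2 + σ₀sq (X ω)) * (1 - π₁ (X ω)))
    (t₀ : ℝ) (ht₀ : t₀ ∈ Set.Icc (0 : ℝ) 1)
    (Dt : 𝒳 → ℝ)
    (hDt : ∀ x, Dt x = (if 0 < μ₁ x - μ₀ x then (1 : ℝ) else 0)
      + t₀ * (if μ₁ x - μ₀ x = 0 then (1 : ℝ) else 0))
    (d₀ : 𝒳 → ℝ) (hd₀ : ∀ x, d₀ x = if 0 < μ₁ x - μ₀ x then (1 : ℝ) else 0) :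
    variance (aipw X A Y Dt π₁ μ₁ μ₀) P
      = variance (fun ω => d₀ (X ω) * μ₁ (X ω) + (1 - d₀ (X ω)) * μ₀ (X ω)) P
        + ∫ ω, ((if 0 < μ₁ (X ω) - μ₀ (X ω) then (1 : ℝ) else 0) * σ₁sq (X ω) / π₁ (X ω)
            + (if μ₁ (X ω) - μ₀ (X ω) < 0 then (1 : ℝ) else 0) * σ₀sq (X ω)
              / (1 - π₁ (X ω))) ∂P
        + ∫ ω, (t₀ ^ 2 * σ₁sq (X ω) / π₁ (X ω)
            + (1 - t₀) ^ 2 * σ₀sq (X ω) / (1 - π₁ (X ω)))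
            * (if μ₁ (X ω) - μ₀ (X ω) = 0 then (1 : ℝ) else 0) ∂P := by
  have hτ : Measurable fun x => μ₁ x - μ₀ x := hμ₁m.sub hμ₀m
  have hDm : Measurable fun x => smoothedRule t₀ (μ₁ x - μ₀ x) :=
    (measurable_smoothedRule t₀).comp hτ
  rw [show Dt = fun x => smoothedRule t₀ (μ₁ x - μ₀ x) from funext hDt,
    variance_aipw P hX hA hAbin hYL2 hc.1 hπ₁m hπ₁r hcondA hμ₁m hμ₀m hμ₁L2 hμ₀L2 hcond1 hcond0
      hcondsq1 hcondsq0 hDm (fun x => smoothedRule_mem_Icc ht₀ _),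
    integral_smoothedRule_variance P hX hτ hc.1 hπ₁m hπ₁r hσ₁L1 hσ₀L1, add_assoc]
  congr 2
  funext ω
  rw [hd₀]
  exact smoothedRule_sub_mul_add _ _ _

/-- Limiting variance of the fixed-asymmetry smoothed estimator: for
`t₀ ∈ [0,1]`, define `D_{t₀}(x) := 1{τ(x)>0} + t₀·1{τ(x)=0}` with `τ = μ₁ − μ₀`. Then
`Var(ψ(D_{t₀}, π₁, (μ₁,μ₀)))` equals
`Var(d₀(X)μ₁(X)+(1−d₀(X))μ₀(X)) + E[1{τ(X)>0}σ₁²(X)/π₁(X) + 1{τ(X)<0}σ₀²(X)/(1−π₁(X))]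
 + E[(t₀²σ₁²(X)/π₁(X) + (1−t₀)²σ₀²(X)/(1−π₁(X)))·1{τ(X)=0}]`,
a regular part not depending on `t₀` plus a nonregular part supported on `{τ(X)=0}`. -/
theorem stmt_10 {Ω 𝒳 : Type*} [MeasurableSpace Ω] [MeasurableSpace 𝒳]
    (P : Measure Ω) [IsProbabilityMeasure P]
    (X : Ω → 𝒳) (A Y : Ω → ℝ)
    (hX : Measurable X) (hA : Measurable A) (hY : Measurable Y)
    (hAbin : ∀ ω, A ω = 0 ∨ A ω = 1) (hYL2 : MemLp Y 2 P)
    (c : ℝ) (hc : c ∈ Set.Ioo (0 : ℝ) (1 / 2))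
    (π₁ : 𝒳 → ℝ) (hπ₁m : Measurable π₁) (hπ₁r : ∀ x, π₁ x ∈ Set.Icc c (1 - c))
    (hcondA : P[A | MeasurableSpace.comap X inferInstance]
      =ᵐ[P] fun ω => π₁ (X ω))
    (μ₁ μ₀ : 𝒳 → ℝ) (hμ₁m : Measurable μ₁) (hμ₀m : Measurable μ₀)
    (hμ₁L2 : MemLp (fun ω => μ₁ (X ω)) 2 P) (hμ₀L2 : MemLp (fun ω => μ₀ (X ω)) 2 P)
    (hcond1 : P[fun ω => A ω * Y ω | MeasurableSpace.comap X inferInstance]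
      =ᵐ[P] fun ω => μ₁ (X ω) * π₁ (X ω))
    (hcond0 : P[fun ω => (1 - A ω) * Y ω | MeasurableSpace.comap X inferInstance]
      =ᵐ[P] fun ω => μ₀ (X ω) * (1 - π₁ (X ω)))
    (σ₁sq σ₀sq : 𝒳 → ℝ) (hσ₁m : Measurable σ₁sq) (hσ₀m : Measurable σ₀sq)
    (hσ₁nn : ∀ x, 0 ≤ σ₁sq x) (hσ₀nn : ∀ x, 0 ≤ σ₀sq x)
    (hσ₁L1 : Integrable (fun ω => σ₁sq (X ω)) P)
    (hσ₀L1 : Integrable (fun ω => σ₀sq (X ω)) P)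
    (hcondsq1 : P[fun ω => A ω * Y ω ^ 2 | MeasurableSpace.comap X inferInstance]
      =ᵐ[P] fun ω => (μ₁ (X ω) ^ 2 + σ₁sq (X ω)) * π₁ (X ω))
    (hcondsq0 : P[fun ω => (1 - A ω) * Y ω ^ 2 | MeasurableSpace.comap X inferInstance]
      =ᵐ[P] fun ω => (μ₀ (X ω) ^ 2 + σ₀sq (X ω)) * (1 - π₁ (X ω)))
    (t₀ : ℝ) (ht₀ : t₀ ∈ Set.Icc (0 : ℝ) 1)
    (Dt : 𝒳 → ℝ)
    (hDt : ∀ x, Dt x = (if 0 < μ₁ x - μ₀ x then (1 : ℝ) else 0)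
      + t₀ * (if μ₁ x - μ₀ x = 0 then (1 : ℝ) else 0))
    (d₀ : 𝒳 → ℝ) (hd₀ : ∀ x, d₀ x = if 0 < μ₁ x - μ₀ x then (1 : ℝ) else 0) :
    variance (aipw X A Y Dt π₁ μ₁ μ₀) P
      = variance (fun ω => d₀ (X ω) * μ₁ (X ω) + (1 - d₀ (X ω)) * μ₀ (X ω)) P
        + ∫ ω, ((if 0 < μ₁ (X ω) - μ₀ (X ω) then (1 : ℝ) else 0) * σ₁sq (X ω) / π₁ (X ω)
            + (if μ₁ (X ω) - μ₀ (X ω) < 0 then (1 : ℝ) else 0) * σ₀sq (X ω)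
              / (1 - π₁ (X ω))) ∂P
        + ∫ ω, (t₀ ^ 2 * σ₁sq (X ω) / π₁ (X ω)
            + (1 - t₀) ^ 2 * σ₀sq (X ω) / (1 - π₁ (X ω)))
            * (if μ₁ (X ω) - μ₀ (X ω) = 0 then (1 : ℝ) else 0) ∂P :=
  stmt_10_general P X A Y hX hA hAbin hYL2 c hc π₁ hπ₁m hπ₁r hcondA μ₁ μ₀ hμ₁m hμ₀m hμ₁L2 hμ₀L2
    hcond1 hcond0 σ₁sq σ₀sq hσ₁L1 hσ₀L1 hcondsq1 hcondsq0 t₀ ht₀ Dt hDt d₀ hd₀
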